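/- Under the same hypotheses as the robustness theorem for the matrix projector-splitting integrator (F Lipschitz with constant L and bounded by B, non-tangential part of F bounded by ε near the exact solution, initial value A(t0) of rank r), suppose that in each of the three substeps of every time step the substep differential equation is not solved exactly but replaced by an approximation whose local error is bounded by h·η. Then the resulting perturbed iterates Ỹ_n satisfy ‖Ỹ_n − A(t_n)‖ ≤ c1 h + c2 ε + c3 η for all n with t_n = t0 + nh ≤ T, where the constants c1, c2, c3 depend only on L, B and T − t0. -/

import Mathlib

open Matrix Set

namespace MatrixPSInexact

/-- Frobenius norm of a real matrix. -/
noncomputable def mfrob {α β : Type*} [Fintype α] [Fintype β] (A : Matrix α β ℝ) : ℝ :=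
  Real.sqrt (∑ a, ∑ b, A a b ^ 2)

/-- One step of the matrix projector-splitting integrator from `t0` to `t1` with
*inexact* substeps: in each of the K-, S- and L-substeps the exact solution of the
substep differential equation (with the computed initial value) is replaced by an
approximation whose local error is at most `δ` (`= h·η`) in the Frobenius norm. -/
noncomputable def MatStepInexact {n1 n2 r : ℕ}
    (F : ℝ → Matrix (Fin n1) (Fin n2) ℝ → Matrix (Fin n1) (Fin n2) ℝ)
    (t0 t1 δ : ℝ)
    (U0 : Matrix (Fin n1) (Fin r) ℝ) (S0 : Matrix (Fin r) (Fin r) ℝ)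
    (V0 : Matrix (Fin n2) (Fin r) ℝ)
    (U1 : Matrix (Fin n1) (Fin r) ℝ) (S1 : Matrix (Fin r) (Fin r) ℝ)
    (V1 : Matrix (Fin n2) (Fin r) ℝ) : Prop :=
  ∃ (K : ℝ → Matrix (Fin n1) (Fin r) ℝ) (Shat : Matrix (Fin r) (Fin r) ℝ)
    (S : ℝ → Matrix (Fin r) (Fin r) ℝ) (Stil : Matrix (Fin r) (Fin r) ℝ)
    (Lf : ℝ → Matrix (Fin n2) (Fin r) ℝ),
    -- K-step: exact solution `K`, computed end value `U1 Ŝ1` with local error ≤ δ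
    K t0 = U0 * S0 ∧
    (∀ t ∈ Icc t0 t1, ∀ a b, HasDerivWithinAt (fun s => K s a b)
      ((F t (K t * V0ᵀ) * V0) a b) (Icc t0 t1) t) ∧
    mfrob (U1 * Shat - K t1) ≤ δ ∧ U1ᵀ * U1 = 1 ∧
    -- S-step: exact solution `S` starting from `Ŝ1`, computed end value `S̃` with error ≤ δ
    S t0 = Shat ∧
    (∀ t ∈ Icc t0 t1, ∀ a b, HasDerivWithinAt (fun s => S s a b)
      ((-(U1ᵀ * F t (U1 * S t * V0ᵀ) * V0)) a b) (Icc t0 t1) t) ∧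
    mfrob (Stil - S t1) ≤ δ ∧
    -- L-step: exact solution `Lf` starting from `V0 S̃ᵀ`, computed end value `V1 S1ᵀ`
    -- with local error ≤ δ
    Lf t0 = V0 * Stilᵀ ∧
    (∀ t ∈ Icc t0 t1, ∀ a b, HasDerivWithinAt (fun s => Lf s a b)
      (((U1ᵀ * F t (U1 * (Lf t)ᵀ))ᵀ) a b) (Icc t0 t1) t) ∧
    mfrob (V1 * S1ᵀ - Lf t1) ≤ δ ∧ V1ᵀ * V1 = 1

/-!
Write `h = t₁ - t₀`, `P = U₁U₁ᵀ`, `Q = V₀V₀ᵀ` and `e₀ = ‖Y₀ - A(t₀)‖`. Embedded in the space of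
`n1 × n2` matrices as `K V₀ᵀ`, `U₁ S V₀ᵀ` and `U₁ Lᵀ`, the three substeps solve the projected
equations `Ż = F(t, Z) Q`, `Ż = -P F(t, Z) Q` and `Ż = P F(t, Z)`, and
`X Q - P X Q + P X + (1 - P) X (1 - Q) = X`. Multiplying by an orthogonal projection does not
increase the Frobenius norm, so each substep moves by at most `B h`; all of them therefore stay
within `ρ = e₀ + 4 B h + 2 δ` of `A(t)`, and the increment of each differs from the matching
projection of `A(t₁) - A(t₀)` by at most `L ρ h`. The leftover `(1 - P) (A(t₁) - A(t₀)) (1 - Q)`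
is at most `(ε + L ρ) h` by the non-tangency hypothesis, which extends from invertible to all `S`
because invertible matrices are dense. This gives `e₁ ≤ (1 + 4 L h) e₀ + O(h ε + δ + L h (B h + δ))`
with `δ = h η`, and the discrete Grönwall inequality sums these local errors.
-/

open Filter Topology

attribute [local instance] Matrix.frobeniusNormedAddCommGroup Matrix.frobeniusNormedSpace

section Frobenius

variable {l m n : Type*} [Fintype l] [Fintype m] [Fintype n] [DecidableEq l]

theorem mfrob_eq_norm (X : Matrix m n ℝ) : mfrob X = ‖X‖ := by
  simp only [mfrob, frobenius_norm_def, Real.norm_eq_abs, Real.rpow_two, sq_abs,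
    Real.sqrt_eq_rpow, one_div]

theorem norm_sq_eq_trace (X : Matrix m n ℝ) : ‖X‖ ^ 2 = trace (Xᵀ * X) := by
  rw [← mfrob_eq_norm, mfrob, Real.sq_sqrt (by positivity), trace, Finset.sum_comm]
  simp only [diag, mul_apply, transpose_apply, sq]

theorem norm_mul_of_transpose_mul_self {U : Matrix m l ℝ} (hU : Uᵀ * U = 1)
    (X : Matrix l n ℝ) : ‖U * X‖ = ‖X‖ := by
  rw [← sq_eq_sq₀ (norm_nonneg _) (norm_nonneg _), norm_sq_eq_trace, norm_sq_eq_trace,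
    transpose_mul, Matrix.mul_assoc, ← Matrix.mul_assoc Uᵀ, hU, Matrix.one_mul]

theorem norm_mul_transpose_of_transpose_mul_self {V : Matrix n l ℝ} (hV : Vᵀ * V = 1)
    (X : Matrix m l ℝ) : ‖X * Vᵀ‖ = ‖X‖ := by
  rw [← frobenius_norm_transpose, transpose_mul, transpose_transpose,
    norm_mul_of_transpose_mul_self hV, frobenius_norm_transpose]

theorem isStarProjection_mul_transpose [DecidableEq n] {V : Matrix n l ℝ}
    (hV : Vᵀ * V = 1) : IsStarProjection (V * Vᵀ) where
  isIdempotentElem := by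
    rw [IsIdempotentElem, Matrix.mul_assoc, ← Matrix.mul_assoc Vᵀ, hV, Matrix.one_mul]
  isSelfAdjoint := by
    rw [IsSelfAdjoint, star_eq_conjTranspose, conjTranspose_eq_transpose_of_trivial,
      transpose_mul, transpose_transpose]

theorem transpose_eq_of_isStarProjection [DecidableEq n] {p : Matrix n n ℝ}
    (hp : IsStarProjection p) : pᵀ = p := by
  rw [← conjTranspose_eq_transpose_of_trivial, ← star_eq_conjTranspose]
  exact hp.isSelfAdjoint

theorem norm_mul_sq_of_isStarProjection [DecidableEq n] {p : Matrix n n ℝ}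
    (hp : IsStarProjection p) (X : Matrix m n ℝ) : ‖X * p‖ ^ 2 = trace (Xᵀ * X * p) := by
  rw [norm_sq_eq_trace, transpose_mul, transpose_eq_of_isStarProjection hp, Matrix.mul_assoc,
    trace_mul_comm, Matrix.mul_assoc, Matrix.mul_assoc, hp.isIdempotentElem.eq,
    ← Matrix.mul_assoc]

theorem norm_mul_le_of_isStarProjection [DecidableEq n] {p : Matrix n n ℝ}
    (hp : IsStarProjection p) (X : Matrix m n ℝ) : ‖X * p‖ ≤ ‖X‖ := by
  have pythagoras : ‖X * p‖ ^ 2 + ‖X * (1 - p)‖ ^ 2 = ‖X‖ ^ 2 := by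
    rw [norm_mul_sq_of_isStarProjection hp, norm_mul_sq_of_isStarProjection hp.one_sub,
      norm_sq_eq_trace, ← trace_add, ← Matrix.mul_add, add_sub_cancel, Matrix.mul_one]
  exact le_of_pow_le_pow_left₀ two_ne_zero (norm_nonneg _) <| by
    nlinarith [sq_nonneg ‖X * (1 - p)‖]

theorem norm_mul_le_of_isStarProjection_left [DecidableEq m] {p : Matrix m m ℝ}
    (hp : IsStarProjection p) (X : Matrix m n ℝ) : ‖p * X‖ ≤ ‖X‖ := by
  rw [← frobenius_norm_transpose, transpose_mul, transpose_eq_of_isStarProjection hp,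
    ← frobenius_norm_transpose X]
  exact norm_mul_le_of_isStarProjection hp Xᵀ

theorem norm_mul_mul_le_of_isStarProjection [DecidableEq m] [DecidableEq n] {p : Matrix m m ℝ}
    {q : Matrix n n ℝ} (hp : IsStarProjection p) (hq : IsStarProjection q) (X : Matrix m n ℝ) :
    ‖p * X * q‖ ≤ ‖X‖ :=
  (norm_mul_le_of_isStarProjection hq _).trans (norm_mul_le_of_isStarProjection_left hp X)

end Frobenius

theorem dense_setOf_isUnit {𝕜 n : Type*} [NontriviallyNormedField 𝕜] [Fintype n]
    [DecidableEq n] : Dense {S : Matrix n n 𝕜 | IsUnit S} := by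
  intro S
  have hS : Tendsto (fun c : 𝕜 => S + c • (1 : Matrix n n 𝕜)) (𝓝[≠] 0) (𝓝 S) := by
    have : Continuous fun c : 𝕜 => S + c • (1 : Matrix n n 𝕜) := by fun_prop
    simpa using (this.tendsto 0).mono_left nhdsWithin_le_nhds
  refine mem_closure_of_tendsto hS ?_
  filter_upwards [nhdsNE_le_cofinite 0 (Matrix.finite_spectrum (-S)).compl_mem_cofinite]
    with c hc
  simpa [spectrum.mem_iff, Algebra.algebraMap_eq_smul_one, add_comm] using hc

section Calculus

variable {l m n k : Type*} [Fintype m] [Fintype n] {s : Set ℝ}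

theorem norm_sub_le_of_forall_hasDerivWithinAt_apply {f f' : ℝ → Matrix m n ℝ} {a b C x y : ℝ}
    (hf : ∀ t ∈ Icc a b, ∀ i j, HasDerivWithinAt (fun s => f s i j) (f' t i j) (Icc a b) t)
    (hC : ∀ t ∈ Icc a b, ‖f' t‖ ≤ C) (hx : x ∈ Icc a b) (hy : y ∈ Icc a b) :
    ‖f y - f x‖ ≤ C * (b - a) := by
  have hderiv : ∀ t ∈ Icc a b, HasDerivWithinAt f (f' t) (Icc a b) t :=
    fun t ht => hasDerivWithinAt_pi.2 fun i => hasDerivWithinAt_pi.2 (hf t ht i)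
  have hmvt := (convex_Icc a b).norm_image_sub_le_of_norm_hasDerivWithin_le hderiv hC hx hy
  have hC0 : 0 ≤ C := (norm_nonneg _).trans (hC x hx)
  exact hmvt.trans (mul_le_mul_of_nonneg_left (Real.dist_le_of_mem_Icc hy hx) hC0)

theorem hasDerivWithinAt_mul_mul_apply [Fintype l] [Fintype k] {f : ℝ → Matrix m n ℝ}
    {f' : Matrix m n ℝ} {x : ℝ} (P : Matrix l m ℝ) (Q : Matrix n k ℝ)
    (h : ∀ i j, HasDerivWithinAt (fun t => f t i j) (f' i j) s x) (i : l) (j : k) :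
    HasDerivWithinAt (fun t => (P * f t * Q) i j) ((P * f' * Q) i j) s x := by
  simp only [mul_apply]
  exact .fun_sum fun c _ => (HasDerivWithinAt.fun_sum fun d _ => (h d c).const_mul _).mul_const _

end Calculus

section ProjectedFlow

variable {m n : Type*} [Fintype m] [Fintype n]
  {F : ℝ → Matrix m n ℝ → Matrix m n ℝ} {A Z : ℝ → Matrix m n ℝ} {P : Matrix m m ℝ}
  {Q : Matrix n n ℝ} {a b L B ε ρ : ℝ}

def SolvesProjected (F : ℝ → Matrix m n ℝ → Matrix m n ℝ) (P : Matrix m m ℝ)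
    (Q : Matrix n n ℝ) (a b : ℝ) (Z : ℝ → Matrix m n ℝ) : Prop :=
  ∀ t ∈ Icc a b, ∀ i j,
    HasDerivWithinAt (fun s => Z s i j) ((P * F t (Z t) * Q) i j) (Icc a b) t

theorem SolvesProjected.norm_sub_le (hZ : SolvesProjected F P Q a b Z)
    (hPQ : ∀ X : Matrix m n ℝ, ‖P * X * Q‖ ≤ ‖X‖) (hF_bdd : ∀ t ∈ Icc a b, ∀ Y, ‖F t Y‖ ≤ B)
    {x y : ℝ} (hx : x ∈ Icc a b) (hy : y ∈ Icc a b) : ‖Z y - Z x‖ ≤ B * (b - a) :=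
  norm_sub_le_of_forall_hasDerivWithinAt_apply hZ
    (fun t ht => (hPQ _).trans (hF_bdd t ht _)) hx hy

theorem SolvesProjected.norm_sub_sub_le (hZ : SolvesProjected F P Q a b Z)
    (hPQ : ∀ X : Matrix m n ℝ, ‖P * X * Q‖ ≤ ‖X‖) (hL : 0 ≤ L)
    (hF_lip : ∀ t ∈ Icc a b, ∀ Y Y', ‖F t Y - F t Y'‖ ≤ L * ‖Y - Y'‖)
    (hA : ∀ t ∈ Icc a b, ∀ i j, HasDerivWithinAt (fun s => A s i j) (F t (A t) i j) (Icc a b) t)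
    (hZA : ∀ t ∈ Icc a b, ‖Z t - A t‖ ≤ ρ) (hab : a ≤ b) :
    ‖Z b - Z a - P * (A b - A a) * Q‖ ≤ L * ρ * (b - a) := by
  have hderiv : ∀ t ∈ Icc a b, ∀ i j, HasDerivWithinAt (fun s => (Z s - P * A s * Q) i j)
      ((P * (F t (Z t) - F t (A t)) * Q) i j) (Icc a b) t := by
    intro t ht i j
    simpa only [Matrix.sub_apply, Matrix.mul_sub, Matrix.sub_mul] using
      (hZ t ht i j).fun_sub (hasDerivWithinAt_mul_mul_apply P Q (hA t ht) i j)
  have hbound : ∀ t ∈ Icc a b, ‖P * (F t (Z t) - F t (A t)) * Q‖ ≤ L * ρ := fun t ht =>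
    calc ‖P * (F t (Z t) - F t (A t)) * Q‖ ≤ ‖F t (Z t) - F t (A t)‖ := hPQ _
      _ ≤ L * ‖Z t - A t‖ := hF_lip t ht _ _
      _ ≤ L * ρ := mul_le_mul_of_nonneg_left (hZA t ht) hL
  have := norm_sub_le_of_forall_hasDerivWithinAt_apply hderiv hbound (left_mem_Icc.2 hab)
    (right_mem_Icc.2 hab)
  rwa [show Z b - P * A b * Q - (Z a - P * A a * Q) = Z b - Z a - P * (A b - A a) * Q by
    simp only [Matrix.mul_sub, Matrix.sub_mul]; abel] at this

theorem norm_mul_sub_mul_le (hPQ : ∀ X : Matrix m n ℝ, ‖P * X * Q‖ ≤ ‖X‖) (hL : 0 ≤ L)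
    (hF_lip : ∀ t ∈ Icc a b, ∀ Y Y', ‖F t Y - F t Y'‖ ≤ L * ‖Y - Y'‖)
    (hA : ∀ t ∈ Icc a b, ∀ i j, HasDerivWithinAt (fun s => A s i j) (F t (A t) i j) (Icc a b) t)
    (hε : ∀ t ∈ Icc a b, ‖P * F t (Z t) * Q‖ ≤ ε) (hZA : ∀ t ∈ Icc a b, ‖Z t - A t‖ ≤ ρ)
    (hab : a ≤ b) : ‖P * (A b - A a) * Q‖ ≤ (ε + L * ρ) * (b - a) := by
  have hbound : ∀ t ∈ Icc a b, ‖P * F t (A t) * Q‖ ≤ ε + L * ρ := fun t ht =>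
    calc ‖P * F t (A t) * Q‖
        ≤ ‖P * F t (Z t) * Q‖ + ‖P * (F t (A t) - F t (Z t)) * Q‖ := by
          simpa only [Matrix.mul_sub, Matrix.sub_mul, add_sub_cancel] using
            norm_add_le (P * F t (Z t) * Q) (P * (F t (A t) - F t (Z t)) * Q)
      _ ≤ ε + L * ‖A t - Z t‖ := add_le_add (hε t ht) ((hPQ _).trans (hF_lip t ht _ _))
      _ ≤ ε + L * ρ := by rw [norm_sub_rev]; gcongr; exact hZA t ht
  have := norm_sub_le_of_forall_hasDerivWithinAt_apply
    (fun t ht => hasDerivWithinAt_mul_mul_apply P Q (hA t ht)) hbound (left_mem_Icc.2 hab)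
    (right_mem_Icc.2 hab)
  rwa [← Matrix.sub_mul, ← Matrix.mul_sub] at this

theorem norm_sub_le_of_three_substeps [DecidableEq m] [DecidableEq n] {p : Matrix m m ℝ}
    {q : Matrix n n ℝ} {Z₁ Z₂ Z₃ : ℝ → Matrix m n ℝ} {Y : Matrix m n ℝ} {δ : ℝ}
    (hp : IsStarProjection p) (hq : IsStarProjection q) (hL : 0 ≤ L)
    (hF_lip : ∀ t ∈ Icc a b, ∀ Y Y', ‖F t Y - F t Y'‖ ≤ L * ‖Y - Y'‖)
    (hF_bdd : ∀ t ∈ Icc a b, ∀ Y, ‖F t Y‖ ≤ B)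
    (hA : ∀ t ∈ Icc a b, ∀ i j, HasDerivWithinAt (fun s => A s i j) (F t (A t) i j) (Icc a b) t)
    (hZ₁ : SolvesProjected F 1 q a b Z₁) (hZ₂ : SolvesProjected F (-p) q a b Z₂)
    (hZ₃ : SolvesProjected F p 1 a b Z₃) (h₁₂ : ‖Z₂ a - Z₁ b‖ ≤ δ) (h₂₃ : ‖Z₃ a - Z₂ b‖ ≤ δ)
    (h₃ : ‖Y - Z₃ b‖ ≤ δ) (hε : ∀ t ∈ Icc a b, ‖(1 - p) * F t (Z₂ t) * (1 - q)‖ ≤ ε)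
    (hab : a ≤ b) :
    ‖Y - A b‖ ≤ (1 + 4 * L * (b - a)) * ‖Z₁ a - A a‖
      + ((b - a) * ε + 3 * δ + 4 * L * (b - a) * (4 * B * (b - a) + 2 * δ)) := by
  have ha : a ∈ Icc a b := left_mem_Icc.2 hab
  have hb : b ∈ Icc a b := right_mem_Icc.2 hab
  have hB : 0 ≤ B := (norm_nonneg _).trans (hF_bdd a ha 0)
  have hδ : 0 ≤ δ := (norm_nonneg _).trans h₁₂
  have h₁ : ∀ X : Matrix m n ℝ, ‖(1 : Matrix m m ℝ) * X * q‖ ≤ ‖X‖ :=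
    norm_mul_mul_le_of_isStarProjection (.one _) hq
  have h₂ : ∀ X : Matrix m n ℝ, ‖-p * X * q‖ ≤ ‖X‖ := fun X => by
    simpa only [Matrix.neg_mul, norm_neg] using norm_mul_mul_le_of_isStarProjection hp hq X
  have h₃' : ∀ X : Matrix m n ℝ, ‖p * X * (1 : Matrix n n ℝ)‖ ≤ ‖X‖ :=
    norm_mul_mul_le_of_isStarProjection hp (.one _)
  -- all three trajectories stay within `3 B (b - a) + 2 δ` of `Z₁ a`, hence within `ρ` of `A`
  have hZ₂_near : ∀ t ∈ Icc a b, ‖Z₂ t - Z₁ a‖ ≤ 2 * B * (b - a) + δ := fun t ht => by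
    have := norm_sub_le_norm_sub_add_norm_sub (Z₂ t) (Z₂ a) (Z₁ a)
    have := norm_sub_le_norm_sub_add_norm_sub (Z₂ a) (Z₁ b) (Z₁ a)
    linarith [(hZ₂.norm_sub_le h₂ hF_bdd ha ht), hZ₁.norm_sub_le h₁ hF_bdd ha hb]
  have hnear : ∀ t ∈ Icc a b, ∀ W, ‖W - Z₁ a‖ ≤ 3 * B * (b - a) + 2 * δ →
      ‖W - A t‖ ≤ ‖Z₁ a - A a‖ + 4 * B * (b - a) + 2 * δ := fun t ht W hW => by
    have := norm_sub_le_norm_sub_add_norm_sub W (Z₁ a) (A t)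
    have := norm_sub_le_norm_sub_add_norm_sub (Z₁ a) (A a) (A t)
    have := norm_sub_le_of_forall_hasDerivWithinAt_apply hA (fun t ht => hF_bdd t ht _) ht ha
    linarith
  set ρ := ‖Z₁ a - A a‖ + 4 * B * (b - a) + 2 * δ with hρ
  have hZ₁A : ∀ t ∈ Icc a b, ‖Z₁ t - A t‖ ≤ ρ := fun t ht => hnear t ht _ <| by
    nlinarith [hZ₁.norm_sub_le h₁ hF_bdd ha ht, mul_nonneg hB (sub_nonneg.2 hab)]
  have hZ₂A : ∀ t ∈ Icc a b, ‖Z₂ t - A t‖ ≤ ρ := fun t ht => hnear t ht _ <| by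
    nlinarith [hZ₂_near t ht, mul_nonneg hB (sub_nonneg.2 hab)]
  have hZ₃A : ∀ t ∈ Icc a b, ‖Z₃ t - A t‖ ≤ ρ := fun t ht => hnear t ht _ <| by
    have := norm_sub_le_norm_sub_add_norm_sub (Z₃ t) (Z₃ a) (Z₁ a)
    have := norm_sub_le_norm_sub_add_norm_sub (Z₃ a) (Z₂ b) (Z₁ a)
    linarith [hZ₃.norm_sub_le h₃' hF_bdd ha ht, hZ₂_near b hb]
  have hR₁ := hZ₁.norm_sub_sub_le h₁ hL hF_lip hA hZ₁A hab
  have hR₂ := hZ₂.norm_sub_sub_le h₂ hL hF_lip hA hZ₂A hab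
  have hR₃ := hZ₃.norm_sub_sub_le h₃' hL hF_lip hA hZ₃A hab
  have hN := norm_mul_sub_mul_le (norm_mul_mul_le_of_isStarProjection hp.one_sub hq.one_sub)
    hL hF_lip hA hε hZ₂A hab
  -- the four projections `X q`, `-p X q`, `p X` and `(1 - p) X (1 - q)` sum to `X`
  have hsplit : Y - A b = (Z₁ a - A a - (1 - p) * (A b - A a) * (1 - q))
      + (Z₂ a - Z₁ b + (Z₁ b - Z₁ a - (1 : Matrix m m ℝ) * (A b - A a) * q))
      + (Z₃ a - Z₂ b + (Z₂ b - Z₂ a - -p * (A b - A a) * q))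
      + (Y - Z₃ b + (Z₃ b - Z₃ a - p * (A b - A a) * (1 : Matrix n n ℝ))) := by
    simp only [Matrix.sub_mul, Matrix.mul_sub, Matrix.one_mul, Matrix.mul_one, Matrix.neg_mul]
    abel
  calc ‖Y - A b‖
      ≤ ‖Z₁ a - A a‖ + (ε + L * ρ) * (b - a) + (δ + L * ρ * (b - a)) + (δ + L * ρ * (b - a))
        + (δ + L * ρ * (b - a)) := by
        rw [hsplit]
        exact norm_add₄_le.trans <| add_le_add_three
          (add_le_add ((norm_sub_le _ _).trans (add_le_add le_rfl hN))
            ((norm_add_le _ _).trans (add_le_add h₁₂ hR₁)))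
          ((norm_add_le _ _).trans (add_le_add h₂₃ hR₂))
          ((norm_add_le _ _).trans (add_le_add h₃ hR₃))
    _ = _ := by rw [hρ]; ring

end ProjectedFlow

theorem discrete_gronwall_of_lt {u : ℕ → ℝ} {q g : ℝ} {N : ℕ} (hu : ∀ k, 0 ≤ u k) (hq : 0 ≤ q)
    (hg : 0 ≤ g) (hstep : ∀ k < N, u (k + 1) ≤ (1 + q) * u k + g) :
    u N ≤ (u 0 + N * g) * Real.exp (N * q) := by
  have hstop : ∀ k, u (min (k + 1) N) ≤ (1 + q) * u (min k N) + g := fun k => by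
    rcases lt_or_ge k N with hk | hk
    · rw [min_eq_left hk, min_eq_left hk.le]
      exact hstep k hk
    · rw [min_eq_right hk, min_eq_right (hk.trans k.le_succ)]
      nlinarith [hu N]
  simpa using discrete_gronwall (u := fun k => u (min k N)) (c := fun _ => q) (b := fun _ => g)
    (hu _) (fun k _ => hstop k) (fun _ _ => hq) (fun _ _ => hg) (Nat.zero_le N)

theorem accumulated_error_le {L B Δ ε η h : ℝ} {N : ℕ} (hL : 0 ≤ L) (hB : 0 ≤ B) (hε : 0 ≤ ε)
    (hη : 0 ≤ η) (hh : 0 ≤ h) (hN : N * h ≤ Δ) :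
    N * (h * ε + 3 * (h * η) + 4 * L * h * (4 * B * h + 2 * (h * η)))
        * Real.exp (N * (4 * L * h))
      ≤ Real.exp (4 * L * Δ) * (16 * L * B * Δ) * h + Real.exp (4 * L * Δ) * Δ * ε
        + Real.exp (4 * L * Δ) * (3 * Δ + 8 * L * Δ ^ 2) * η := by
  have hNh : 0 ≤ N * h := by positivity
  have hN_sq : (N : ℝ) ≤ N ^ 2 := by exact_mod_cast Nat.le_self_pow two_ne_zero N
  have hexp : Real.exp (N * (4 * L * h)) ≤ Real.exp (4 * L * Δ) :=
    Real.exp_le_exp.2 (by nlinarith)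
  have hsum : N * (h * ε + 3 * (h * η) + 4 * L * h * (4 * B * h + 2 * (h * η)))
      ≤ 16 * L * B * Δ * h + Δ * ε + (3 * Δ + 8 * L * Δ ^ 2) * η := by
    have h₁ : N * h * h ≤ Δ * h := mul_le_mul_of_nonneg_right hN hh
    have h₂ : N * h ^ 2 ≤ Δ ^ 2 := by nlinarith [mul_le_mul hN hN hNh (hNh.trans hN)]
    nlinarith [mul_le_mul_of_nonneg_left h₁ (mul_nonneg hL hB),
      mul_le_mul_of_nonneg_left h₂ (mul_nonneg hL hη), mul_le_mul_of_nonneg_right hN hε,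
      mul_le_mul_of_nonneg_right hN hη]
  calc _ ≤ (16 * L * B * Δ * h + Δ * ε + (3 * Δ + 8 * L * Δ ^ 2) * η) * Real.exp (4 * L * Δ) :=
        mul_le_mul hsum hexp (Real.exp_pos _).le ((mul_nonneg (Nat.cast_nonneg N) (by
          positivity)).trans hsum)
    _ = _ := by ring

theorem MatStepInexact.orthonormal_right {n1 n2 r : ℕ}
    {F : ℝ → Matrix (Fin n1) (Fin n2) ℝ → Matrix (Fin n1) (Fin n2) ℝ} {a b δ : ℝ}
    {U₀ U₁ : Matrix (Fin n1) (Fin r) ℝ} {S₀ S₁ : Matrix (Fin r) (Fin r) ℝ}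
    {V₀ V₁ : Matrix (Fin n2) (Fin r) ℝ} (hstep : MatStepInexact F a b δ U₀ S₀ V₀ U₁ S₁ V₁) :
    V₁ᵀ * V₁ = 1 := by
  obtain ⟨-, -, -, -, -, -, -, -, -, -, -, -, -, -, -, hV₁⟩ := hstep
  exact hV₁

theorem MatStepInexact.norm_sub_le {n1 n2 r : ℕ}
    {F : ℝ → Matrix (Fin n1) (Fin n2) ℝ → Matrix (Fin n1) (Fin n2) ℝ}
    {A : ℝ → Matrix (Fin n1) (Fin n2) ℝ} {I : Set ℝ} {L B ε δ a b : ℝ}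
    {U₀ U₁ : Matrix (Fin n1) (Fin r) ℝ} {S₀ S₁ : Matrix (Fin r) (Fin r) ℝ}
    {V₀ V₁ : Matrix (Fin n2) (Fin r) ℝ} (hstep : MatStepInexact F a b δ U₀ S₀ V₀ U₁ S₁ V₁)
    (hV₀ : V₀ᵀ * V₀ = 1) (hL : 0 ≤ L)
    (hF_lip : ∀ t ∈ I, ∀ Y Y', ‖F t Y - F t Y'‖ ≤ L * ‖Y - Y'‖)
    (hF_bdd : ∀ t ∈ I, ∀ Y, ‖F t Y‖ ≤ B)
    (hA : ∀ t ∈ I, ∀ i j, HasDerivWithinAt (fun s => A s i j) (F t (A t) i j) I t)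
    (hε : ∀ t ∈ I, ∀ (U : Matrix (Fin n1) (Fin r) ℝ) (S : Matrix (Fin r) (Fin r) ℝ)
      (V : Matrix (Fin n2) (Fin r) ℝ), Uᵀ * U = 1 → Vᵀ * V = 1 → IsUnit S →
      ‖(1 - U * Uᵀ) * F t (U * S * Vᵀ) * (1 - V * Vᵀ)‖ ≤ ε)
    (hI : Icc a b ⊆ I) (hab : a ≤ b) :
    ‖U₁ * S₁ * V₁ᵀ - A b‖ ≤ (1 + 4 * L * (b - a)) * ‖U₀ * S₀ * V₀ᵀ - A a‖
      + ((b - a) * ε + 3 * δ + 4 * L * (b - a) * (4 * B * (b - a) + 2 * δ)) := by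
  obtain ⟨K, Shat, S, Stil, Lf, hK₀, hK, hK_err, hU₁, hS₀, hS, hS_err, hL₀, hLf, hL_err, -⟩ := hstep
  rw [mfrob_eq_norm] at hK_err hS_err hL_err
  have hZ₁ : SolvesProjected F 1 (V₀ * V₀ᵀ) a b (fun t => K t * V₀ᵀ) := fun t ht i j => by
    simpa only [Matrix.one_mul, Matrix.mul_assoc] using
      hasDerivWithinAt_mul_mul_apply 1 V₀ᵀ (hK t ht) i j
  have hZ₂ : SolvesProjected F (-(U₁ * U₁ᵀ)) (V₀ * V₀ᵀ) a b (fun t => U₁ * S t * V₀ᵀ) :=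
    fun t ht i j => by
      simpa only [Matrix.mul_neg, Matrix.neg_mul, Matrix.mul_assoc] using
        hasDerivWithinAt_mul_mul_apply U₁ V₀ᵀ (hS t ht) i j
  have hZ₃ : SolvesProjected F (U₁ * U₁ᵀ) 1 a b (fun t => U₁ * (Lf t)ᵀ) := fun t ht i j => by
    simpa only [Matrix.mul_one, Matrix.mul_assoc, transpose_transpose] using
      hasDerivWithinAt_mul_mul_apply U₁ 1 (f := fun s => (Lf s)ᵀ)
        (f' := U₁ᵀ * F t (U₁ * (Lf t)ᵀ)) (fun i j => hLf t ht j i) i j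
  have hε₂ : ∀ t ∈ Icc a b, ‖(1 - U₁ * U₁ᵀ) * F t (U₁ * S t * V₀ᵀ) * (1 - V₀ * V₀ᵀ)‖ ≤ ε :=
    fun t ht => by
      have hF : Continuous (F t) := LipschitzWith.continuous (K := L.toNNReal) <|
        .of_dist_le' fun Y Y' => by simpa only [dist_eq_norm] using hF_lip t (hI ht) Y Y'
      exact dense_setOf_isUnit.induction (fun S hS => hε t (hI ht) U₁ S V₀ hU₁ hV₀ hS)
        (isClosed_le (by fun_prop) continuous_const) (S t)
  refine (norm_sub_le_of_three_substeps (δ := δ) (isStarProjection_mul_transpose hU₁)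
    (isStarProjection_mul_transpose hV₀) hL (fun t ht => hF_lip t (hI ht))
    (fun t ht => hF_bdd t (hI ht)) (fun t ht i j => (hA t (hI ht) i j).mono hI) hZ₁ hZ₂ hZ₃
    ?_ ?_ ?_ hε₂ hab).trans_eq ?_
  · rwa [hS₀, ← Matrix.sub_mul, norm_mul_transpose_of_transpose_mul_self hV₀]
  · rwa [hL₀, transpose_mul, transpose_transpose, ← Matrix.mul_assoc, ← Matrix.sub_mul,
      ← Matrix.mul_sub, norm_mul_transpose_of_transpose_mul_self hV₀,
      norm_mul_of_transpose_mul_self hU₁]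
  · rwa [show U₁ * S₁ * V₁ᵀ - U₁ * (Lf b)ᵀ = U₁ * (V₁ * S₁ᵀ - Lf b)ᵀ by
      rw [transpose_sub, transpose_mul, transpose_transpose, Matrix.mul_sub, Matrix.mul_assoc],
      norm_mul_of_transpose_mul_self hU₁, frobenius_norm_transpose]
  · rw [hK₀]

/-- **Robustness of the matrix projector-splitting integrator with inexact substeps.**
Under the hypotheses of the robustness theorem (F `L`-Lipschitz and bounded by `B`,
non-tangential part of `F` at rank-`r` matrices bounded by `ε`, initial value of rank
`r`), if in each substep of every time step the substep differential equation is solved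
with local error at most `h·η`, then the perturbed iterates `Ỹₙ` satisfy
`‖Ỹₙ - A(tₙ)‖ ≤ c₁ h + c₂ ε + c₃ η`, where `c₁, c₂, c₃` depend only on `L`, `B`
and `T - t0`. -/
theorem matrix_projector_splitting_robustness_inexact
    (L B Δ : ℝ) :
    ∃ c1 c2 c3 : ℝ, ∀ (t0 T : ℝ), T - t0 = Δ →
    ∀ (n1 n2 r : ℕ)
      (F : ℝ → Matrix (Fin n1) (Fin n2) ℝ → Matrix (Fin n1) (Fin n2) ℝ)
      (A : ℝ → Matrix (Fin n1) (Fin n2) ℝ),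
    (∀ (Y : Matrix (Fin n1) (Fin n2) ℝ) a b, ContinuousOn (fun t => F t Y a b) (Icc t0 T)) →
    (∀ t ∈ Icc t0 T, ∀ Y Y', mfrob (F t Y - F t Y') ≤ L * mfrob (Y - Y')) →
    (∀ t ∈ Icc t0 T, ∀ Y, mfrob (F t Y) ≤ B) →
    (∀ t ∈ Icc t0 T, ∀ a b, HasDerivWithinAt (fun s => A s a b) (F t (A t) a b) (Icc t0 T) t) →
    (A t0).rank = r →
    ∀ ε : ℝ, 0 ≤ ε →
    (∀ t ∈ Icc t0 T, ∀ (U : Matrix (Fin n1) (Fin r) ℝ) (S : Matrix (Fin r) (Fin r) ℝ)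
       (V : Matrix (Fin n2) (Fin r) ℝ), Uᵀ * U = 1 → Vᵀ * V = 1 → IsUnit S →
       mfrob ((1 - U * Uᵀ) * F t (U * S * Vᵀ) * (1 - V * Vᵀ)) ≤ ε) →
    ∀ η : ℝ, 0 ≤ η →
    ∀ h : ℝ, 0 < h →
    ∀ (Us : ℕ → Matrix (Fin n1) (Fin r) ℝ) (Ss : ℕ → Matrix (Fin r) (Fin r) ℝ)
      (Vs : ℕ → Matrix (Fin n2) (Fin r) ℝ),
    A t0 = Us 0 * Ss 0 * (Vs 0)ᵀ → (Us 0)ᵀ * Us 0 = 1 → (Vs 0)ᵀ * Vs 0 = 1 →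
    (∀ k : ℕ, t0 + (k + 1 : ℕ) * h ≤ T →
      MatStepInexact F (t0 + k * h) (t0 + (k + 1 : ℕ) * h) (h * η)
        (Us k) (Ss k) (Vs k) (Us (k + 1)) (Ss (k + 1)) (Vs (k + 1))) →
    ∀ N : ℕ, t0 + N * h ≤ T →
      mfrob (Us N * Ss N * (Vs N)ᵀ - A (t0 + N * h)) ≤ c1 * h + c2 * ε + c3 * η := by
  refine ⟨Real.exp (4 * max L 0 * Δ) * (16 * max L 0 * B * Δ), Real.exp (4 * max L 0 * Δ) * Δ,
    Real.exp (4 * max L 0 * Δ) * (3 * Δ + 8 * max L 0 * Δ ^ 2), ?_⟩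
  intro t0 T hΔ n1 n2 r F A _ hF_lip hF_bdd hA _ ε hε hε_normal η hη h hh Us Ss Vs hY₀ _ hV₀
    hsteps N hN
  simp only [mfrob_eq_norm] at hF_lip hF_bdd hε_normal ⊢
  have hNh : (N : ℝ) * h ≤ Δ := by linarith
  have hB : 0 ≤ B := (norm_nonneg _).trans (hF_bdd t0 ⟨le_rfl, by nlinarith⟩ 0)
  have hF_lip' : ∀ t ∈ Icc t0 T, ∀ Y Y', ‖F t Y - F t Y'‖ ≤ max L 0 * ‖Y - Y'‖ :=
    fun t ht Y Y' => (hF_lip t ht Y Y').trans (by gcongr; exact le_max_left L 0)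
  have hgrid : ∀ k < N, t0 + (k + 1 : ℕ) * h ≤ T := fun k hk => by
    nlinarith [show ((k + 1 : ℕ) : ℝ) ≤ N by exact_mod_cast hk]
  have hV : ∀ k ≤ N, (Vs k)ᵀ * Vs k = 1
    | 0, _ => hV₀
    | k + 1, hk => (hsteps k (hgrid k hk)).orthonormal_right
  have hrec : ∀ k < N, ‖Us (k + 1) * Ss (k + 1) * (Vs (k + 1))ᵀ - A (t0 + (k + 1 : ℕ) * h)‖
      ≤ (1 + 4 * max L 0 * h) * ‖Us k * Ss k * (Vs k)ᵀ - A (t0 + k * h)‖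
        + (h * ε + 3 * (h * η) + 4 * max L 0 * h * (4 * B * h + 2 * (h * η))) := fun k hk => by
    have hlen : t0 + (k + 1 : ℕ) * h - (t0 + k * h) = h := by push_cast; ring
    have := (hsteps k (hgrid k hk)).norm_sub_le (hV k hk.le) (le_max_right L 0) hF_lip' hF_bdd
      hA hε_normal (Icc_subset_Icc (by nlinarith [k.cast_nonneg (α := ℝ)]) (hgrid k hk))
      (by linarith)
    rwa [hlen] at this
  have := discrete_gronwall_of_lt (u := fun k => ‖Us k * Ss k * (Vs k)ᵀ - A (t0 + k * h)‖)
    (fun _ => norm_nonneg _) (by positivity) (by positivity) hrec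
  simp only [Nat.cast_zero, zero_mul, add_zero, hY₀, sub_self, norm_zero, zero_add] at this
  exact this.trans (accumulated_error_le (le_max_right L 0) hB hε hη hh.le hNh)

end MatrixPSInexact
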